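/- arXiv:2003.10705 — 7 statements merged into one kernel-verified Lean document; each statement's English description precedes it below -/
import Mathlib

section
/- If n ≥ 1, d₁, d₂ ∈ {0,…,9} with d₁ ≠ d₂ and d₁ > 0, and ℓ₁, ℓ₂ ≥ 1 are integers satisfying P_n = (1/9)(d₁·10^{ℓ₁+ℓ₂} − (d₁ − d₂)·10^{ℓ₂} − d₂), then (ℓ₁ + ℓ₂)·log 10 − 3 < n·log α < (ℓ₁ + ℓ₂)·log 10 + 1, where α is the unique real root of x³ − x − 1. -/
def padovan : ℕ → ℕ
  | 0 => 0
  | 1 => 1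
  | 2 => 1
  | n + 3 => padovan (n + 1) + padovan n

lemma alpha_one_lt {α : ℝ} (hα : α ^ 3 = α + 1) : 1 < α := by
  nlinarith [sq_nonneg α, sq_nonneg (α - 1), sq_nonneg (α + 1), sq_nonneg (α*α - 1)]

lemma alpha_lt_14 {α : ℝ} (hα : α ^ 3 = α + 1) : α < 1.4 := by
  have h := alpha_one_lt hα
  nlinarith [sq_nonneg (α - 1.4)]

lemma pad_le_pow {α : ℝ} (hα : α ^ 3 = α + 1) : ∀ n, (padovan n : ℝ) ≤ α ^ n
  | 0 => by simp [padovan]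
  | 1 => by simpa [padovan] using (alpha_one_lt hα).le
  | 2 => by
      have h := alpha_one_lt hα
      simp only [padovan, Nat.cast_one]
      nlinarith
  | (n+3) => by
      have h1 := pad_le_pow hα n
      have h2 := pad_le_pow hα (n+1)
      have key : α ^ (n+3) = α ^ (n+1) + α ^ n := by
        have e : α ^ (n+3) = α ^ n * α ^ 3 := by ring
        rw [e, hα]; ring
      simp only [padovan]
      push_cast
      rw [key]; linarith

lemma pow_le_pad {α : ℝ} (hα : α ^ 3 = α + 1) : ∀ n, 1 ≤ n → α ^ n ≤ 2.4 * (padovan n : ℝ)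
  | 0, h => by omega
  | 1, _ => by
      have h1 := alpha_lt_14 hα
      simp only [padovan, Nat.cast_one]
      nlinarith
  | 2, _ => by
      have h1 := alpha_lt_14 hα
      have h0 := alpha_one_lt hα
      simp only [padovan, Nat.cast_one]
      nlinarith
  | 3, _ => by
      have h1 := alpha_lt_14 hα
      simp only [padovan, Nat.cast_one]
      nlinarith
  | (n+4), _ => by
      have h1 := pow_le_pad hα (n+1) (by omega)
      have h2 := pow_le_pad hα (n+2) (by omega)
      have key : α ^ (n+4) = α ^ (n+2) + α ^ (n+1) := by
        have e : α ^ (n+4) = α ^ (n+1) * α ^ 3 := by ring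
        rw [e, hα]; ring
      have e2 : padovan (n+4) = padovan (n+2) + padovan (n+1) := rfl
      rw [e2]
      push_cast
      rw [key]; linarith

/-- If `P n = (1/9)(d₁·10^(ℓ₁+ℓ₂) − (d₁−d₂)·10^ℓ₂ − d₂)` with `n ≥ 1`, distinct digits
`d₁ ≠ d₂`, `d₁ > 0`, and `ℓ₁, ℓ₂ ≥ 1`, then
`(ℓ₁+ℓ₂)·log 10 − 3 < n·log α < (ℓ₁+ℓ₂)·log 10 + 1`, where `α` is the real root of
`x³ − x − 1`. -/
theorem padovan_concat_size_relation
    (α : ℝ) (hα : α ^ 3 = α + 1)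
    (n d₁ d₂ ℓ₁ ℓ₂ : ℕ) (hn : 1 ≤ n)
    (hd₁ : d₁ ≤ 9) (hd₂ : d₂ ≤ 9) (hne : d₁ ≠ d₂) (hd₁pos : 0 < d₁)
    (hℓ₁ : 1 ≤ ℓ₁) (hℓ₂ : 1 ≤ ℓ₂)
    (heq : (9 : ℤ) * (padovan n : ℤ) =
      (d₁ : ℤ) * 10 ^ (ℓ₁ + ℓ₂) - ((d₁ : ℤ) - (d₂ : ℤ)) * 10 ^ ℓ₂ - (d₂ : ℤ)) :
    ((ℓ₁ : ℝ) + (ℓ₂ : ℝ)) * Real.log 10 - 3 < (n : ℝ) * Real.log α ∧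
      (n : ℝ) * Real.log α < ((ℓ₁ : ℝ) + (ℓ₂ : ℝ)) * Real.log 10 + 1 := by
  have hα1 : 1 < α := alpha_one_lt hα
  have hαpos : 0 < α := lt_trans one_pos hα1
  -- integer setup
  set P : ℤ := (padovan n : ℤ) with hP
  set A : ℤ := 10 ^ ℓ₁ with hAdef
  set B : ℤ := 10 ^ ℓ₂ with hBdef
  have hA10 : (10:ℤ) ≤ A := by
    calc (10:ℤ) = 10 ^ 1 := by ring
    _ ≤ 10 ^ ℓ₁ := pow_le_pow_right₀ (by norm_num) hℓ₁
  have hB10 : (10:ℤ) ≤ B := by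
    calc (10:ℤ) = 10 ^ 1 := by ring
    _ ≤ 10 ^ ℓ₂ := pow_le_pow_right₀ (by norm_num) hℓ₂
  have hApos : (0:ℤ) < A := by linarith
  have hBpos : (0:ℤ) < B := by linarith
  have heq' : 9 * P = (d₁ : ℤ) * (A * B) - ((d₁ : ℤ) - (d₂ : ℤ)) * B - (d₂ : ℤ) := by
    rw [heq, pow_add]
  have hd₁z : (1:ℤ) ≤ (d₁:ℤ) := by exact_mod_cast hd₁pos
  have hd₁z9 : (d₁:ℤ) ≤ 9 := by exact_mod_cast hd₁
  have hd₂z0 : (0:ℤ) ≤ (d₂:ℤ) := Int.natCast_nonneg d₂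
  have hd₂z9 : (d₂:ℤ) ≤ 9 := by exact_mod_cast hd₂
  have hABnn : (0:ℤ) ≤ A * B := le_of_lt (mul_pos hApos hBpos)
  have h10B : 10 * B ≤ A * B := mul_le_mul_of_nonneg_right hA10 (le_of_lt hBpos)
  have hup : P ≤ A * B := by
    rcases lt_or_gt_of_ne hne with hlt | hgt
    · -- d₁ < d₂, so d₁ ≤ 8
      have h8 : (d₁:ℤ) ≤ 8 := by
        have : d₁ < d₂ := hlt
        have : (d₁:ℤ) < (d₂:ℤ) := by exact_mod_cast this
        linarith
      have t1 : (d₁:ℤ) * (A*B) ≤ 8 * (A*B) := mul_le_mul_of_nonneg_right h8 hABnn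
      have t2 : ((d₂:ℤ) - (d₁:ℤ)) * B ≤ 9 * B :=
        mul_le_mul_of_nonneg_right (by linarith) (le_of_lt hBpos)
      have er : ((d₂:ℤ) - (d₁:ℤ)) * B = -(((d₁:ℤ) - (d₂:ℤ)) * B) := by ring
      linarith
    · -- d₂ < d₁
      have hgt' : (d₂:ℤ) < (d₁:ℤ) := by exact_mod_cast hgt
      have t1 : (d₁:ℤ) * (A*B) ≤ 9 * (A*B) := mul_le_mul_of_nonneg_right hd₁z9 hABnn
      have t2 : (1:ℤ) * B ≤ ((d₁:ℤ) - (d₂:ℤ)) * B :=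
        mul_le_mul_of_nonneg_right (by linarith) (le_of_lt hBpos)
      linarith
  have hlow : A * B ≤ 20 * P := by
    rcases lt_or_gt_of_ne hne with hlt | hgt
    · -- d₁ < d₂
      have hlt' : (d₁:ℤ) < (d₂:ℤ) := by exact_mod_cast hlt
      have t1 : 1 * (A*B) ≤ (d₁:ℤ) * (A*B) := mul_le_mul_of_nonneg_right hd₁z hABnn
      have t2 : (1:ℤ) * B ≤ ((d₂:ℤ) - (d₁:ℤ)) * B :=
        mul_le_mul_of_nonneg_right (by linarith) (le_of_lt hBpos)
      have er : ((d₂:ℤ) - (d₁:ℤ)) * B = -(((d₁:ℤ) - (d₂:ℤ)) * B) := by ring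
      linarith
    · -- d₂ < d₁ : 9P ≥ d₁(AB - B) - 9 ≥ AB - B - 9
      have hgt' : (d₂:ℤ) < (d₁:ℤ) := by exact_mod_cast hgt
      have t1 : ((d₁:ℤ) - (d₂:ℤ)) * B ≤ (d₁:ℤ) * B :=
        mul_le_mul_of_nonneg_right (by linarith) (le_of_lt hBpos)
      have s1 : 9 * P ≥ (d₁:ℤ) * (A*B) - (d₁:ℤ) * B - 9 := by linarith
      have s2 : A*B - B ≤ (d₁:ℤ) * (A*B - B) :=
        le_mul_of_one_le_left (by linarith) hd₁z
      have s3 : (d₁:ℤ) * (A*B - B) = (d₁:ℤ) * (A*B) - (d₁:ℤ) * B := by ring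
      linarith
  have hPpos : (0:ℤ) < P := by linarith
  -- move to ℝ
  rw [hP] at hup hlow hPpos
  have hPn0 : 0 < padovan n := by exact_mod_cast hPpos
  have hPR : (0:ℝ) < (padovan n : ℝ) := by exact_mod_cast hPn0
  have hXR : (0:ℝ) < (10:ℝ) ^ (ℓ₁ + ℓ₂) := by positivity
  have hupR : (padovan n : ℝ) ≤ (10:ℝ) ^ (ℓ₁ + ℓ₂) := by
    have := hup
    rw [hAdef, hBdef, ← pow_add] at this
    exact_mod_cast this
  have hlowR : (10:ℝ) ^ (ℓ₁ + ℓ₂) ≤ 20 * (padovan n : ℝ) := by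
    have := hlow
    rw [hAdef, hBdef, ← pow_add] at this
    exact_mod_cast this
  have hpadle : (padovan n : ℝ) ≤ α ^ n := pad_le_pow hα n
  have hpowle : α ^ n ≤ 2.4 * (padovan n : ℝ) := pow_le_pad hα n hn
  have hαn : (0:ℝ) < α ^ n := pow_pos hαpos n
  have hlogX : ((ℓ₁ : ℝ) + (ℓ₂ : ℝ)) * Real.log 10 = Real.log ((10:ℝ) ^ (ℓ₁ + ℓ₂)) := by
    rw [Real.log_pow]; push_cast; ring
  have hlogα : (n : ℝ) * Real.log α = Real.log (α ^ n) := (Real.log_pow α n).symm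
  have hexp1 : (2.7182818283:ℝ) < Real.exp 1 := Real.exp_one_gt_d9
  have hlog20 : Real.log 20 < 3 := by
    rw [show (3:ℝ) = 1 + 1 + 1 by norm_num]
    rw [Real.log_lt_iff_lt_exp (by norm_num), Real.exp_add, Real.exp_add]
    nlinarith
  have hlog24 : Real.log 2.4 < 1 := by
    rw [Real.log_lt_iff_lt_exp (by norm_num)]
    have : Real.exp 1 = Real.exp 1 := rfl
    nlinarith [Real.exp_one_gt_d9]
  constructor
  · rw [hlogX, hlogα]
    have e1 : Real.log ((10:ℝ) ^ (ℓ₁ + ℓ₂)) ≤ Real.log (20 * (padovan n : ℝ)) :=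
      Real.log_le_log hXR hlowR
    have e2 : Real.log (20 * (padovan n : ℝ)) = Real.log 20 + Real.log (padovan n : ℝ) :=
      Real.log_mul (by norm_num) (ne_of_gt hPR)
    have e3 : Real.log (padovan n : ℝ) ≤ Real.log (α ^ n) := Real.log_le_log hPR hpadle
    linarith
  · rw [hlogX, hlogα]
    have e1 : Real.log (α ^ n) ≤ Real.log (2.4 * (padovan n : ℝ)) :=
      Real.log_le_log hαn hpowle
    have e2 : Real.log (2.4 * (padovan n : ℝ)) = Real.log 2.4 + Real.log (padovan n : ℝ) :=
      Real.log_mul (by norm_num) (ne_of_gt hPR)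
    have e3 : Real.log (padovan n : ℝ) ≤ Real.log ((10:ℝ) ^ (ℓ₁ + ℓ₂)) :=
      Real.log_le_log hPR hupR
    linarith
end

section
/- Let α, β, γ be the three complex roots of x³ − x − 1, with α the real root, and set a = (α+1)/((α−β)(α−γ)), b = (β+1)/((β−α)(β−γ)), c = (γ+1)/((γ−α)(γ−β)). Then for all n ≥ 1, |P_n − a·α^n| = |b·β^n + c·γ^n| < α^{−n/2}. -/
/-!
The non-real roots `β` and `γ = conj β` satisfy `β + γ = -α` and `β * γ = α ^ 2 - 1 = α⁻¹`, so
`‖β‖ = α ^ (-1/2)`. The Binet formula, checked on `P 0, P 1, P 2`, gives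
`P n - a * α ^ n = b * β ^ n + c * γ ^ n` with `c = conj b`, so the error is at most
`2 * ‖b‖ * ‖β‖ ^ n`. Finally `‖b‖ ^ 2 = (α ^ 2 - α) / ((3 * α ^ 2 - 1) * (3 * α ^ 2 - 4))` depends on
`α` alone and is below `1 / 4` because `1 < α < 3 / 2`.
-/

open ComplexConjugate

def binetCoeff {K : Type*} [Field K] (x y z : K) : K := (x + 1) / ((x - y) * (x - z))

theorem padovan_eq_of_initial {R : Type*} [CommRing R] {x y z a b c : R}
    (hx : x ^ 3 = x + 1) (hy : y ^ 3 = y + 1) (hz : z ^ 3 = z + 1)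
    (h0 : a + b + c = 0) (h1 : a * x + b * y + c * z = 1)
    (h2 : a * x ^ 2 + b * y ^ 2 + c * z ^ 2 = 1) (n : ℕ) :
    (padovan n : R) = a * x ^ n + b * y ^ n + c * z ^ n := by
  induction n using padovan.induct with
  | case1 => simp only [padovan, Nat.cast_zero, pow_zero]; linear_combination -h0
  | case2 => simp only [padovan, Nat.cast_one, pow_one]; linear_combination -h1
  | case3 => simp only [padovan, Nat.cast_one]; linear_combination -h2
  | case4 n ih₁ ih₀ =>
    rw [padovan, Nat.cast_add, ih₁, ih₀]
    simp only [Nat.succ_eq_add_one]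
    linear_combination (-(a * x ^ n)) * hx - b * y ^ n * hy - c * z ^ n * hz

theorem padovan_eq_binet {K : Type*} [Field K] {x y z : K}
    (hxy : x ≠ y) (hxz : x ≠ z) (hyz : y ≠ z)
    (hx : x ^ 3 = x + 1) (hy : y ^ 3 = y + 1) (hz : z ^ 3 = z + 1) (n : ℕ) :
    (padovan n : K) =
      binetCoeff x y z * x ^ n + binetCoeff y x z * y ^ n + binetCoeff z x y * z ^ n := by
  have hxy' := sub_ne_zero.2 hxy
  have hxz' := sub_ne_zero.2 hxz
  have hyz' := sub_ne_zero.2 hyz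
  have hyx' := sub_ne_zero.2 hxy.symm
  have hzx' := sub_ne_zero.2 hxz.symm
  have hzy' := sub_ne_zero.2 hyz.symm
  have hsq {r : K} (hr : r ^ 3 = r + 1) : (r + 1) * r ^ 2 = r ^ 2 + r + 1 := by
    linear_combination hr
  apply padovan_eq_of_initial hx hy hz <;>
    simp only [binetCoeff, div_mul_eq_mul_div, hsq hx, hsq hy, hsq hz] <;> field_simp <;> ring

theorem sq_add_mul_add_sq_of_roots {K : Type*} [Field K] {x y : K}
    (hx : x ^ 3 = x + 1) (hy : y ^ 3 = y + 1) (hxy : x ≠ y) : x ^ 2 + x * y + y ^ 2 = 1 := by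
  have h : (x - y) * (x ^ 2 + x * y + y ^ 2 - 1) = 0 := by linear_combination hx - hy
  exact sub_eq_zero.1 ((mul_eq_zero.1 h).resolve_left (sub_ne_zero.2 hxy))

theorem add_add_eq_zero_of_roots {K : Type*} [Field K] {x y z : K}
    (hx : x ^ 3 = x + 1) (hy : y ^ 3 = y + 1) (hz : z ^ 3 = z + 1)
    (hxy : x ≠ y) (hxz : x ≠ z) (hyz : y ≠ z) : x + y + z = 0 := by
  have h : (y - z) * (x + y + z) = 0 := by
    linear_combination sq_add_mul_add_sq_of_roots hx hy hxy - sq_add_mul_add_sq_of_roots hx hz hxz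
  exact (mul_eq_zero.1 h).resolve_left (sub_ne_zero.2 hyz)

namespace Complex

variable {z : ℂ}

theorem ofReal_ne_of_im_ne_zero (r : ℝ) (hz : z.im ≠ 0) : (r : ℂ) ≠ z :=
  fun h => hz (h ▸ ofReal_im r)

theorem ofReal_ne_conj_of_im_ne_zero (r : ℝ) (hz : z.im ≠ 0) : (r : ℂ) ≠ conj z :=
  ofReal_ne_of_im_ne_zero r (by rwa [conj_im, neg_ne_zero])

theorem ne_conj_of_im_ne_zero (hz : z.im ≠ 0) : z ≠ conj z :=
  fun h => hz (conj_eq_iff_im.1 h.symm)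

end Complex

namespace Padovan

variable {α : ℝ} {β : ℂ}

theorem one_lt_realRoot (hα : α ^ 3 = α + 1) : 1 < α := by
  nlinarith [sq_nonneg (α - 1), sq_nonneg (α + 1), sq_nonneg α]

theorem realRoot_lt_three_halves (hα : α ^ 3 = α + 1) : α < 3 / 2 := by
  nlinarith [sq_nonneg (α - 3 / 2), sq_nonneg (α + 1), sq_nonneg α]

theorem realRoot_inv (hα : α ^ 3 = α + 1) : α⁻¹ = α ^ 2 - 1 :=
  inv_eq_of_mul_eq_one_right (by linear_combination hα)

theorem ofReal_cube_eq (hα : α ^ 3 = α + 1) : (α : ℂ) ^ 3 = α + 1 := by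
  exact_mod_cast congrArg Complex.ofReal hα

theorem conj_cube_eq (hβ : β ^ 3 = β + 1) : conj β ^ 3 = conj β + 1 := by
  simpa using congrArg conj hβ

theorem add_conj_eq_neg (hα : α ^ 3 = α + 1) (hβ : β ^ 3 = β + 1) (hβim : β.im ≠ 0) :
    β + conj β = -α := by
  linear_combination add_add_eq_zero_of_roots (ofReal_cube_eq hα) hβ (conj_cube_eq hβ)
    (Complex.ofReal_ne_of_im_ne_zero α hβim) (Complex.ofReal_ne_conj_of_im_ne_zero α hβim)
    (Complex.ne_conj_of_im_ne_zero hβim)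

theorem mul_conj_eq (hα : α ^ 3 = α + 1) (hβ : β ^ 3 = β + 1) (hβim : β.im ≠ 0) :
    β * conj β = α ^ 2 - 1 := by
  linear_combination (β + conj β - α) * add_conj_eq_neg hα hβ hβim -
    sq_add_mul_add_sq_of_roots hβ (conj_cube_eq hβ) (Complex.ne_conj_of_im_ne_zero hβim)

theorem normSq_eq_inv (hα : α ^ 3 = α + 1) (hβ : β ^ 3 = β + 1) (hβim : β.im ≠ 0) :
    Complex.normSq β = α⁻¹ := by
  apply Complex.ofReal_injective
  rw [← Complex.mul_conj, mul_conj_eq hα hβ hβim, realRoot_inv hα]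
  push_cast
  ring

theorem norm_pow_eq_rpow (hα : α ^ 3 = α + 1) (hβ : β ^ 3 = β + 1) (hβim : β.im ≠ 0) (n : ℕ) :
    ‖β‖ ^ n = α ^ (-(n : ℝ) / 2) := by
  have hα0 : 0 ≤ α := (zero_lt_one.trans (one_lt_realRoot hα)).le
  rw [Complex.norm_def, normSq_eq_inv hα hβ hβim, Real.sqrt_eq_rpow, ← Real.rpow_natCast,
    ← Real.rpow_mul (inv_nonneg.2 hα0), Real.inv_rpow hα0, ← Real.rpow_neg hα0]
  ring_nf

theorem normSq_binetCoeff (hα : α ^ 3 = α + 1) (hβ : β ^ 3 = β + 1) (hβim : β.im ≠ 0) :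
    Complex.normSq (binetCoeff β α (conj β)) =
      (α ^ 2 - α) / ((3 * α ^ 2 - 1) * (3 * α ^ 2 - 4)) := by
  have hs := add_conj_eq_neg hα hβ hβim
  have hp := mul_conj_eq hα hβ hβim
  have hnum : Complex.normSq (β + 1) = α ^ 2 - α := by
    apply Complex.ofReal_injective
    rw [← Complex.mul_conj, map_add, map_one]
    push_cast
    linear_combination hp + hs
  have hden₁ : Complex.normSq (β - α) = 3 * α ^ 2 - 1 := by
    apply Complex.ofReal_injective
    rw [← Complex.mul_conj, map_sub, Complex.conj_ofReal]
    push_cast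
    linear_combination hp - α * hs
  have hden₂ : Complex.normSq (β - conj β) = 3 * α ^ 2 - 4 := by
    apply Complex.ofReal_injective
    rw [← Complex.mul_conj, map_sub, Complex.conj_conj]
    push_cast
    linear_combination (α - β - conj β) * hs + 4 * hp
  rw [binetCoeff, Complex.normSq_div, Complex.normSq_mul, hnum, hden₁, hden₂]

theorem two_mul_norm_binetCoeff_lt_one (hα : α ^ 3 = α + 1) (hβ : β ^ 3 = β + 1)
    (hβim : β.im ≠ 0) : 2 * ‖binetCoeff β α (conj β)‖ < 1 := by
  have h1 := one_lt_realRoot hα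
  have h2 := realRoot_lt_three_halves hα
  have hpos : 0 < (3 * α ^ 2 - 1) * (3 * α ^ 2 - 4) := by nlinarith
  have hsq : (2 * ‖binetCoeff β α (conj β)‖) ^ 2 < 1 := by
    rw [mul_pow, ← Complex.normSq_eq_norm_sq, normSq_binetCoeff hα hβ hβim, mul_div_assoc',
      div_lt_one hpos]
    -- with `α ^ 4 = α ^ 2 + α` this is `10 * α ^ 2 - 13 * α - 4 < 0`
    nlinarith
  exact (pow_lt_one_iff_of_nonneg (by positivity) two_ne_zero).1 hsq

end Padovan

theorem padovan_error_bound_general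
    (α : ℝ) (hα : α ^ 3 = α + 1)
    (β γ : ℂ) (hβ : β ^ 3 = β + 1) (hβim : β.im ≠ 0) (hγ : γ = starRingEnd ℂ β)
    (a b c : ℂ)
    (ha : a = ((α : ℂ) + 1) / (((α : ℂ) - β) * ((α : ℂ) - γ)))
    (hb : b = (β + 1) / ((β - (α : ℂ)) * (β - γ)))
    (hc : c = (γ + 1) / ((γ - (α : ℂ)) * (γ - β)))
    (n : ℕ) :
    ‖(padovan n : ℂ) - a * (α : ℂ) ^ n‖ = ‖b * β ^ n + c * γ ^ n‖ ∧
      ‖(padovan n : ℂ) - a * (α : ℂ) ^ n‖ < α ^ (-(n : ℝ) / 2) := by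
  subst hγ
  have hbinet : (padovan n : ℂ) - a * α ^ n = b * β ^ n + c * conj β ^ n := by
    rw [padovan_eq_binet (Complex.ofReal_ne_of_im_ne_zero α hβim)
      (Complex.ofReal_ne_conj_of_im_ne_zero α hβim) (Complex.ne_conj_of_im_ne_zero hβim)
      (Padovan.ofReal_cube_eq hα) hβ (Padovan.conj_cube_eq hβ)]
    simp only [binetCoeff, ha, hb, hc]
    ring
  have hcb : c = conj b := by simp [hb, hc]
  refine ⟨congrArg norm hbinet, ?_⟩
  calc _ = ‖b * β ^ n + conj (b * β ^ n)‖ := by rw [hbinet, hcb, map_mul, map_pow]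
    _ ≤ 2 * ‖b‖ * ‖β‖ ^ n := by
        refine (norm_add_le _ _).trans_eq ?_
        rw [Complex.norm_conj, norm_mul, norm_pow]
        ring
    _ < 1 * ‖β‖ ^ n := by
        gcongr
        exacts [pow_pos (norm_pos_iff.2 fun h => hβim (by rw [h, Complex.zero_im])) n,
          hb ▸ Padovan.two_mul_norm_binetCoeff_lt_one hα hβ hβim]
    _ = α ^ (-(n : ℝ) / 2) := by rw [one_mul, Padovan.norm_pow_eq_rpow hα hβ hβim]

/-- For `n ≥ 1`, `|P n − a·α^n| = |b·β^n + c·γ^n| < α^(−n/2)`, where `α` is the real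
root of `x³ − x − 1`, `β, γ` the complex conjugate roots, and `a, b, c` the Binet
coefficients. -/
theorem padovan_error_bound
    (α : ℝ) (hα : α ^ 3 = α + 1)
    (β γ : ℂ) (hβ : β ^ 3 = β + 1) (hβim : β.im ≠ 0) (hγ : γ = starRingEnd ℂ β)
    (a b c : ℂ)
    (ha : a = ((α : ℂ) + 1) / (((α : ℂ) - β) * ((α : ℂ) - γ)))
    (hb : b = (β + 1) / ((β - (α : ℂ)) * (β - γ)))
    (hc : c = (γ + 1) / ((γ - (α : ℂ)) * (γ - β)))
    (n : ℕ) (hn : 1 ≤ n) :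
    ‖(padovan n : ℂ) - a * (α : ℂ) ^ n‖ = ‖b * β ^ n + c * γ ^ n‖ ∧
      ‖(padovan n : ℂ) - a * (α : ℂ) ^ n‖ < α ^ (-(n : ℝ) / 2) :=
  padovan_error_bound_general α hα β γ hβ hβim hγ a b c ha hb hc n
end

section
/- Let α be the real root of x³ − x − 1 and a = α(α+1)/(2α²+3α) (equivalently a = (α+1)/((α−β)(α−γ)) where β, γ are the other roots). Then there are no integers n ≥ 1, m ≥ 1, and d with 1 ≤ d ≤ 9 such that 9·a·α^n = d·10^m. Equivalently, the quantity Λ₁ = (9a/d)·α^n·10^{−m} − 1 is nonzero for all such n, m, d. -/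
/-!
Clearing denominators, `9·a·α^n = r` with `r = d·10^m` says that `α` is a root of the integer
polynomial `9·X^n·(X + 1) − r·(2X + 3)`. Since `X³ − X − 1` is monic and irreducible over `ℤ` (Selmer), it
is the minimal polynomial of `α` over `ℤ` and divides that polynomial in `ℤ[X]`. Evaluating at
`X = 2`, where `X³ − X − 1` takes the value `5`, gives `5 ∣ 27·2^n − 7r`; as `5 ∣ 10^m ∣ r`, this
forces `5 ∣ 2^n`, which is absurd.
-/

open Polynomial

theorem Polynomial.Monic.dvd_of_irreducible_of_aeval_eq_zero {R S : Type*} [CommRing R]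
    [IsDomain R] [IsIntegrallyClosed R] [CommRing S] [IsDomain S] [Algebra R S]
    [Module.IsTorsionFree R S] {x : S} {f p : R[X]} (hmon : f.Monic) (hirr : Irreducible f)
    (hf : aeval x f = 0) (hp : aeval x p = 0) : f ∣ p := by
  have hint : IsIntegral R x := ⟨f, hmon, by rwa [← aeval_def]⟩
  have hmin : minpoly R x = f := eq_of_monic_of_associated (minpoly.monic hint) hmon
    ((minpoly.irreducible hint).associated_of_dvd hirr (minpoly.isIntegrallyClosed_dvd hint hf))
  exact hmin ▸ minpoly.isIntegrallyClosed_dvd hint hp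

theorem five_dvd_eval_two_of_aeval_eq_zero {K : Type*} [Field K] [CharZero K] {α : K}
    (hα : α ^ 3 = α + 1) {p : ℤ[X]} (hp : aeval α p = 0) : 5 ∣ p.eval 2 := by
  have hdvd : X ^ 3 - X - 1 ∣ p :=
    (by monicity! : (X ^ 3 - X - 1 : ℤ[X]).Monic).dvd_of_irreducible_of_aeval_eq_zero
      (X_pow_sub_X_sub_one_irreducible (by norm_num)) (by simp [hα]) hp
  simpa using eval_dvd (x := 2) hdvd

theorem nine_mul_mul_pow_ne_mul_ten_pow {α : ℝ} (hα : α ^ 3 = α + 1) (n : ℕ) (d : ℤ) {m : ℕ}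
    (hm : 1 ≤ m) : 9 * (α * (α + 1) / (2 * α ^ 2 + 3 * α)) * α ^ n ≠ d * 10 ^ m := by
  intro h
  have hα_pos : 0 < α := by nlinarith [sq_nonneg α, sq_nonneg (α + 1)]
  have hroot : aeval α (9 * X ^ n * (X + 1) - (d * 10 ^ m : ℤ[X]) * (2 * X + 3)) = 0 := by
    field_simp at h
    simp only [map_sub, map_mul, map_add, map_pow, map_ofNat, map_one, map_intCast, aeval_X]
    linear_combination h
  have h5 := five_dvd_eval_two_of_aeval_eq_zero hα hroot
  simp only [eval_sub, eval_mul, eval_add, eval_pow, eval_X, eval_ofNat, eval_one,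
    eval_intCast] at h5
  have h5r : (5 : ℤ) ∣ d * 10 ^ m := Dvd.dvd.mul_left (dvd_pow (by norm_num) (by omega)) d
  have h5_pow : (5 : ℤ) ∣ 2 ^ n := by
    generalize (2 : ℤ) ^ n = k at h5
    generalize d * 10 ^ m = r at h5 h5r
    omega
  have h5_prime : Prime (5 : ℤ) := Int.prime_iff_natAbs_prime.mpr (by norm_num)
  have h5_two := h5_prime.dvd_of_dvd_pow h5_pow
  norm_num at h5_two

/-- With `α` the real root of `x³ − x − 1` and `a = α(α+1)/(2α²+3α)`, there are no
integers `n ≥ 1`, `m ≥ 1`, `1 ≤ d ≤ 9` with `9·a·α^n = d·10^m`; equivalently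
`Λ₁ = (9a/d)·α^n·10^(−m) − 1` is nonzero for all such `n, m, d`. -/
theorem Lambda1_nonzero
    (α a : ℝ) (hα : α ^ 3 = α + 1)
    (ha : a = α * (α + 1) / (2 * α ^ 2 + 3 * α)) :
    (¬∃ (n m d : ℕ), 1 ≤ n ∧ 1 ≤ m ∧ 1 ≤ d ∧ d ≤ 9 ∧
        9 * a * α ^ n = (d : ℝ) * 10 ^ m) ∧
      ∀ (n m d : ℕ), 1 ≤ n → 1 ≤ m → 1 ≤ d → d ≤ 9 →
        (9 * a / (d : ℝ)) * α ^ n * (10 : ℝ) ^ (-(m : ℤ)) - 1 ≠ 0 := by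
  subst ha
  have key (n m d : ℕ) (hm : 1 ≤ m) :
      9 * (α * (α + 1) / (2 * α ^ 2 + 3 * α)) * α ^ n ≠ d * 10 ^ m :=
    mod_cast nine_mul_mul_pow_ne_mul_ten_pow hα n d hm
  refine ⟨fun ⟨n, m, d, _, hm, _, _, h⟩ => key n m d hm h, fun n m d _ hm hd _ hΛ => ?_⟩
  refine key n m d hm ?_
  have hd0 : (d : ℝ) ≠ 0 := Nat.cast_ne_zero.mpr (by omega)
  rw [zpow_neg, zpow_natCast, sub_eq_zero] at hΛ
  field_simp at hΛ
  linear_combination hΛ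
end

section
/- Let α be the real root of x³ − x − 1 and a = (α+1)/((α−β)(α−γ)) where β, γ are the other roots. Then for all integers n ≥ 1, ℓ₁, ℓ₂ ≥ 1, and digits d₁, d₂ ∈ {0,…,9} with d₁ > 0, one has 9·a·α^n ≠ (d₁·10^{ℓ₁} − (d₁ − d₂))·10^{ℓ₂}. Equivalently, the quantity Λ₂ = ((d₁·10^{ℓ₁} − (d₁−d₂))/(9a))·α^{−n}·10^{ℓ₂} − 1 is nonzero. -/
/-! Since `α` is a simple root of `x³ - x - 1`, `(α - β)(α - γ) = 3α² - 1`, so if `9aαⁿ = M` were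
rational then `9αⁿ(α + 1) = M(3α² - 1)`. The cubic has no rational root, hence is irreducible and
`1, α, α²` are linearly independent over `ℚ`. But `αⁿ(α + 1)` is a combination of `1, α, α²` with
nonnegative integer coefficients and a positive coefficient of `α`, while `M(3α² - 1)` has no
`α` term. -/

open Polynomial

theorem rat_cube_ne_add_one (q : ℚ) : q ^ 3 ≠ q + 1 := by
  intro hq
  have hmonic : (X ^ 3 - X - 1 : ℤ[X]).Monic := by monicity!
  obtain ⟨m, rfl⟩ : IsLocalization.IsInteger ℤ q :=
    isInteger_of_is_root_of_monic hmonic (by simp [hq])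
  simp only [algebraMap_int_eq, eq_intCast] at hq
  have hm : m * (m ^ 2 - 1) = 1 := by
    exact_mod_cast (by linear_combination hq : (m : ℚ) * ((m : ℚ) ^ 2 - 1) = 1)
  rcases Int.eq_one_or_neg_one_of_mul_eq_one hm with rfl | rfl <;> norm_num at hm

theorem irreducible_X_pow_three_sub_X_sub_one : Irreducible (X ^ 3 - X - 1 : ℚ[X]) :=
  irreducible_of_degree_le_three_of_not_isRoot
    (by rw [show (X ^ 3 - X - 1 : ℚ[X]).natDegree = 3 by compute_degree!]; decide)
    fun q hq => rat_cube_ne_add_one q (by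
      simp only [IsRoot.def, eval_sub, eval_pow, eval_X, eval_one] at hq; linear_combination hq)

theorem exists_pow_mul_add_one_eq_natCast {R : Type*} [CommSemiring R] {x : R}
    (hx : x ^ 3 = x + 1) (n : ℕ) :
    ∃ p q r : ℕ, 0 < q ∧ 0 < p + r ∧ x ^ n * (x + 1) = p + q * x + r * x ^ 2 := by
  induction n with
  | zero => exact ⟨1, 1, 0, one_pos, one_pos, by simp [add_comm]⟩
  | succ n ih =>
    obtain ⟨p, q, r, hq, hpr, h⟩ := ih
    refine ⟨r, p + r, q, hpr, by omega, ?_⟩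
    calc x ^ (n + 1) * (x + 1) = x * (x ^ n * (x + 1)) := by ring
      _ = r * x ^ 3 + p * x + q * x ^ 2 := by rw [h]; ring
      _ = r + (p + r : ℕ) * x + q * x ^ 2 := by rw [hx]; push_cast; ring

theorem sub_mul_sub_eq_of_cubic_roots {R : Type*} [CommRing R] [NoZeroDivisors R]
    {p q α β γ : R} (hα : α ^ 3 + p * α + q = 0) (hβ : β ^ 3 + p * β + q = 0)
    (hγ : γ ^ 3 + p * γ + q = 0) (hαβ : α ≠ β) (hαγ : α ≠ γ) (hβγ : β ≠ γ) :
    (α - β) * (α - γ) = 3 * α ^ 2 + p := by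
  have quotient {y z : R} (hy : y ^ 3 + p * y + q = 0) (hz : z ^ 3 + p * z + q = 0)
      (hyz : y ≠ z) : y ^ 2 + y * z + z ^ 2 + p = 0 :=
    (mul_eq_zero.mp (by linear_combination hy - hz : (y - z) * _ = 0)).resolve_left
      (sub_ne_zero.mpr hyz)
  have hsum : α + β + γ = 0 :=
    (mul_eq_zero.mp (by linear_combination quotient hα hβ hαβ - quotient hα hγ hαγ :
      (β - γ) * (α + β + γ) = 0)).resolve_left (sub_ne_zero.mpr hβγ)
  linear_combination (β + γ - 2 * α) * hsum - quotient hβ hγ hβγ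

theorem Complex.sub_mul_sub_conj_eq_of_pow_three_eq {α β : ℂ} (hα : α ^ 3 = α + 1)
    (hαre : α.im = 0) (hβ : β ^ 3 = β + 1) (hβim : β.im ≠ 0) :
    (α - β) * (α - starRingEnd ℂ β) = 3 * α ^ 2 - 1 := by
  have hβ' : (starRingEnd ℂ β) ^ 3 = starRingEnd ℂ β + 1 := by
    rw [← map_pow, hβ, map_add, map_one]
  have hαβ : α ≠ β := fun h => hβim (h ▸ hαre)
  have hαβ' : α ≠ starRingEnd ℂ β := fun h => hβim (by simpa [hαre] using congrArg im h)
  have hββ' : β ≠ starRingEnd ℂ β := fun h => hβim (conj_eq_iff_im.mp h.symm)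
  rw [sub_mul_sub_eq_of_cubic_roots (p := -1) (q := -1) (by linear_combination hα)
    (by linear_combination hβ) (by linear_combination hβ') hαβ hαβ' hββ']
  ring

theorem div_mul_zpow_neg_mul_sub_one_ne_zero {K : Type*} [Field K] {x y z w : K} {n : ℕ}
    (h : y * z ^ n ≠ x * w) : x / y * z ^ (-(n : ℤ)) * w - 1 ≠ 0 := by
  rw [zpow_neg, zpow_natCast, sub_ne_zero,
    show x / y * (z ^ n)⁻¹ * w = x * w / (y * z ^ n) by ring]
  by_cases h0 : y * z ^ n = 0
  · simp [h0]
  · exact fun h' => h ((div_eq_one_iff_eq h0).mp h').symm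

section

variable {K : Type*} [Field K] [CharZero K] {x : K}

theorem minpoly_eq_of_pow_three_eq (hx : x ^ 3 = x + 1) : minpoly ℚ x = X ^ 3 - X - 1 :=
  (minpoly.eq_of_irreducible_of_monic irreducible_X_pow_three_sub_X_sub_one
    (by simp [hx]) (by monicity!)).symm

theorem eq_zero_of_add_mul_add_mul_sq_eq_zero (hx : x ^ 3 = x + 1) {u v w : ℚ}
    (h : (u : K) + v * x + w * x ^ 2 = 0) : u = 0 ∧ v = 0 ∧ w = 0 := by
  set g : ℚ[X] := C u + C v * X + C w * X ^ 2
  have hg : g = 0 := by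
    by_contra hg
    have h3 := minpoly.degree_le_of_ne_zero ℚ x hg (by simpa [g] using h)
    have h2 : g.degree ≤ 2 := by unfold g; compute_degree
    rw [minpoly_eq_of_pow_three_eq hx, show (X ^ 3 - X - 1 : ℚ[X]).degree = 3 by compute_degree!]
      at h3
    exact absurd (h3.trans h2) (by decide)
  refine ⟨?_, ?_, ?_⟩
  · simpa [g] using congrArg (coeff · 0) hg
  · simpa [g] using congrArg (coeff · 1) hg
  · simpa [g] using congrArg (coeff · 2) hg

theorem three_mul_sq_sub_one_ne_zero (hx : x ^ 3 = x + 1) : 3 * x ^ 2 - 1 ≠ 0 := fun h => by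
  simpa using eq_zero_of_add_mul_add_mul_sq_eq_zero hx (u := -1) (v := 0) (w := 3)
    (by push_cast; linear_combination h)

theorem pow_mul_add_one_ne_ratCast_mul (hx : x ^ 3 = x + 1) (n : ℕ) (q : ℚ) :
    x ^ n * (x + 1) ≠ q * (3 * x ^ 2 - 1) := by
  intro h
  obtain ⟨p, r, s, hr, -, hpow⟩ := exists_pow_mul_add_one_eq_natCast hx n
  have := (eq_zero_of_add_mul_add_mul_sq_eq_zero hx (u := p + q) (v := r) (w := s - 3 * q)
    (by push_cast; linear_combination hpow.symm.trans h)).2.1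
  exact hr.ne' (by exact_mod_cast this)

theorem mul_pow_ne_ratCast {a : K} (hx : x ^ 3 = x + 1) (ha : a * (3 * x ^ 2 - 1) = x + 1)
    (n : ℕ) (q : ℚ) : a * x ^ n ≠ q := fun h =>
  pow_mul_add_one_ne_ratCast_mul hx n q (by linear_combination (3 * x ^ 2 - 1) * h - x ^ n * ha)

end

theorem Lambda2_nonzero_general
    (α β γ a : ℂ) (hα : α ^ 3 = α + 1) (hαre : α.im = 0)
    (hβ : β ^ 3 = β + 1) (hβim : β.im ≠ 0) (hγ : γ = starRingEnd ℂ β)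
    (ha : a = (α + 1) / ((α - β) * (α - γ)))
    (n ℓ₁ ℓ₂ d₁ d₂ : ℕ) :
    9 * a * α ^ n ≠ ((d₁ : ℂ) * 10 ^ ℓ₁ - ((d₁ : ℂ) - (d₂ : ℂ))) * 10 ^ ℓ₂ ∧
      ((d₁ : ℂ) * 10 ^ ℓ₁ - ((d₁ : ℂ) - (d₂ : ℂ))) / (9 * a) * α ^ (-(n : ℤ)) *
          10 ^ ℓ₂ - 1 ≠ 0 := by
  have ha' : a * (3 * α ^ 2 - 1) = α + 1 := by
    rw [ha, hγ, Complex.sub_mul_sub_conj_eq_of_pow_three_eq hα hαre hβ hβim,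
      div_mul_cancel₀ _ (three_mul_sq_sub_one_ne_zero hα)]
  have hfirst : 9 * a * α ^ n ≠ ((d₁ : ℂ) * 10 ^ ℓ₁ - ((d₁ : ℂ) - (d₂ : ℂ))) * 10 ^ ℓ₂ := by
    intro h
    apply mul_pow_ne_ratCast hα ha' n (((d₁ * 10 ^ ℓ₁ - (d₁ - d₂)) * 10 ^ ℓ₂ : ℚ) / 9)
    push_cast
    linear_combination h / 9
  exact ⟨hfirst, div_mul_zpow_neg_mul_sub_one_ne_zero hfirst⟩

/-- With `α` the real root of `x³ − x − 1`, `β, γ` the other (complex conjugate) roots,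
and `a = (α+1)/((α−β)(α−γ))`, for all `n, ℓ₁, ℓ₂ ≥ 1` and digits `d₁, d₂ ∈ {0,…,9}`
with `d₁ > 0` one has `9·a·α^n ≠ (d₁·10^ℓ₁ − (d₁−d₂))·10^ℓ₂`; equivalently
`Λ₂ = ((d₁·10^ℓ₁ − (d₁−d₂))/(9a))·α^(−n)·10^ℓ₂ − 1` is nonzero. -/
theorem Lambda2_nonzero
    (α β γ a : ℂ) (hα : α ^ 3 = α + 1) (hαre : α.im = 0)
    (hβ : β ^ 3 = β + 1) (hβim : β.im ≠ 0) (hγ : γ = starRingEnd ℂ β)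
    (ha : a = (α + 1) / ((α - β) * (α - γ)))
    (n ℓ₁ ℓ₂ d₁ d₂ : ℕ) (hn : 1 ≤ n) (hℓ₁ : 1 ≤ ℓ₁) (hℓ₂ : 1 ≤ ℓ₂)
    (hd₁ : d₁ ≤ 9) (hd₂ : d₂ ≤ 9) (hd₁pos : 0 < d₁) :
    9 * a * α ^ n ≠ ((d₁ : ℂ) * 10 ^ ℓ₁ - ((d₁ : ℂ) - (d₂ : ℂ))) * 10 ^ ℓ₂ ∧
      ((d₁ : ℂ) * 10 ^ ℓ₁ - ((d₁ : ℂ) - (d₂ : ℂ))) / (9 * a) * α ^ (-(n : ℤ)) *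
          10 ^ ℓ₂ - 1 ≠ 0 :=
  Lambda2_nonzero_general α β γ a hα hαre hβ hβim hγ ha n ℓ₁ ℓ₂ d₁ d₂
end

section
/- Suppose n > 500, d₁, d₂ ∈ {0,…,9} with d₁ ≠ d₂ and d₁ > 0, and ℓ₁, ℓ₂ ≥ 1 satisfy P_n = (1/9)(d₁·10^{ℓ₁+ℓ₂} − (d₁ − d₂)·10^{ℓ₂} − d₂). Then |9·a·α^n − (d₁·10^{ℓ₁} − (d₁ − d₂))·10^{ℓ₂}| < 18, and consequently |((d₁·10^{ℓ₁} − (d₁−d₂))/(9a))·α^{−n}·10^{ℓ₂} − 1| < 4/α^n. -/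
open ComplexConjugate

def padovanCoeff {K : Type*} [Field K] (x y z : K) : K := (x + 1) / ((x - y) * (x - z))

section Field

variable {K : Type*} [Field K] {x y z : K}

theorem sq_add_mul_add_sq_of_cubic (hx : x ^ 3 = x + 1) (hy : y ^ 3 = y + 1) (hxy : x ≠ y) :
    x ^ 2 + x * y + y ^ 2 = 1 :=
  mul_left_cancel₀ (sub_ne_zero.mpr hxy) (by linear_combination hx - hy)

theorem add_add_eq_zero_of_cubic (hx : x ^ 3 = x + 1) (hy : y ^ 3 = y + 1) (hz : z ^ 3 = z + 1)
    (hxy : x ≠ y) (hxz : x ≠ z) (hyz : y ≠ z) : x + y + z = 0 :=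
  mul_left_cancel₀ (sub_ne_zero.mpr hyz) <| by
    linear_combination sq_add_mul_add_sq_of_cubic hx hy hxy - sq_add_mul_add_sq_of_cubic hx hz hxz

theorem mul_eq_sq_sub_one_of_cubic (hx : x ^ 3 = x + 1) (hy : y ^ 3 = y + 1)
    (hz : z ^ 3 = z + 1) (hxy : x ≠ y) (hxz : x ≠ z) (hyz : y ≠ z) : y * z = x ^ 2 - 1 := by
  linear_combination y * add_add_eq_zero_of_cubic hx hy hz hxy hxz hyz -
    sq_add_mul_add_sq_of_cubic hx hy hxy

theorem sub_mul_sub_eq_of_cubic (hx : x ^ 3 = x + 1) (hy : y ^ 3 = y + 1)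
    (hz : z ^ 3 = z + 1) (hxy : x ≠ y) (hxz : x ≠ z) (hyz : y ≠ z) :
    (x - y) * (x - z) = 3 * x ^ 2 - 1 := by
  linear_combination -x * add_add_eq_zero_of_cubic hx hy hz hxy hxz hyz +
    mul_eq_sq_sub_one_of_cubic hx hy hz hxy hxz hyz

theorem padovan_binet (hx : x ^ 3 = x + 1) (hy : y ^ 3 = y + 1) (hz : z ^ 3 = z + 1)
    (hxy : x ≠ y) (hxz : x ≠ z) (hyz : y ≠ z) (m : ℕ) :
    (padovan m : K) =
      padovanCoeff x y z * x ^ m + padovanCoeff y x z * y ^ m + padovanCoeff z x y * z ^ m := by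
  have hxy' := sub_ne_zero.mpr hxy
  have hxz' := sub_ne_zero.mpr hxz
  have hyz' := sub_ne_zero.mpr hyz
  induction m using Nat.strong_induction_on with
  | _ m ih =>
    -- `∑ x ^ k / ((x - y) * (x - z))` over the three roots is `0, 0, 1, x + y + z` for `k ≤ 3`.
    match m with
    | 0 | 1 =>
      simp only [padovan, padovanCoeff]
      field_simp
      ring
    | 2 =>
      simp only [padovan, padovanCoeff]
      field_simp
      linear_combination (-(x - y) * (x - z) * (y - x) * (y - z) * (z - x) * (z - y)) *
        add_add_eq_zero_of_cubic hx hy hz hxy hxz hyz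
    | k + 3 =>
      rw [padovan, Nat.cast_add, ih (k + 1) (by omega), ih k (by omega)]
      linear_combination (-padovanCoeff x y z * x ^ k) * hx + (-padovanCoeff y x z * y ^ k) * hy +
        (-padovanCoeff z x y * z ^ k) * hz

theorem padovanCoeff_mul_padovanCoeff (hx : x ^ 3 = x + 1) (hy : y ^ 3 = y + 1)
    (hz : z ^ 3 = z + 1) (hxy : x ≠ y) (hxz : x ≠ z) (hyz : y ≠ z) :
    padovanCoeff y x z * padovanCoeff z x y =
      (x ^ 2 - x) / ((3 * x ^ 2 - 1) * (3 * x ^ 2 - 4)) := by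
  have hsum := add_add_eq_zero_of_cubic hx hy hz hxy hxz hyz
  have hprod := mul_eq_sq_sub_one_of_cubic hx hy hz hxy hxz hyz
  rw [padovanCoeff, padovanCoeff, div_mul_div_comm]
  congr 1
  · linear_combination hprod + hsum
  · linear_combination (y - z) * (z - y) * sub_mul_sub_eq_of_cubic hx hy hz hxy hxz hyz +
      (3 * x ^ 2 - 1) * ((x - y - z) * hsum + 4 * hprod)

theorem padovanCoeff_eq_of_cubic (hx : x ^ 3 = x + 1) (hy : y ^ 3 = y + 1)
    (hz : z ^ 3 = z + 1) (hxy : x ≠ y) (hxz : x ≠ z) (hyz : y ≠ z) :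
    padovanCoeff x y z = (x + 1) / (3 * x ^ 2 - 1) := by
  rw [padovanCoeff, sub_mul_sub_eq_of_cubic hx hy hz hxy hxz hyz]

theorem map_padovanCoeff {L : Type*} [Field L] (f : K →+* L) (x y z : K) :
    f (padovanCoeff x y z) = padovanCoeff (f x) (f y) (f z) := by
  simp only [padovanCoeff, map_div₀, map_mul, map_sub, map_add, map_one]

end Field

theorem padovan_real_root_bounds {α : ℝ} (hα : α ^ 3 = α + 1) : 13 / 10 < α ∧ α < 4 / 3 := by
  constructor <;>
    nlinarith [sq_nonneg α, sq_nonneg (α - 13 / 10), sq_nonneg (α - 4 / 3), sq_nonneg (α + 1)]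

section Complex

variable {α : ℝ} {β : ℂ}

theorem cubic_roots_of_im_ne_zero (hα : α ^ 3 = α + 1) (hβ : β ^ 3 = β + 1) (hβim : β.im ≠ 0) :
    (α : ℂ) ^ 3 = α + 1 ∧ conj β ^ 3 = conj β + 1 ∧
      (α : ℂ) ≠ β ∧ (α : ℂ) ≠ conj β ∧ β ≠ conj β := by
  refine ⟨by exact_mod_cast congrArg ((↑) : ℝ → ℂ) hα, by rw [← map_pow, hβ, map_add, map_one],
    fun h => hβim ?_, fun h => hβim ?_, fun h => hβim ?_⟩
  · simpa using (congrArg Complex.im h).symm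
  · simpa using (congrArg Complex.im h).symm
  · exact Complex.conj_eq_iff_im.mp h.symm

theorem norm_le_one_of_cubic (hα : α ^ 3 = α + 1) (hβ : β ^ 3 = β + 1) (hβim : β.im ≠ 0) :
    ‖β‖ ≤ 1 := by
  obtain ⟨hαC, hγ, hαβ, hαγ, hβγ⟩ := cubic_roots_of_im_ne_zero hα hβ hβim
  have hnormSq : Complex.normSq β = α ^ 2 - 1 := by
    exact_mod_cast (Complex.mul_conj β).symm.trans
      (mul_eq_sq_sub_one_of_cubic hαC hβ hγ hαβ hαγ hβγ)
  obtain ⟨-, hα_lt⟩ := padovan_real_root_bounds hα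
  rw [← pow_le_one_iff_of_nonneg (norm_nonneg β) two_ne_zero, ← Complex.normSq_eq_norm_sq,
    hnormSq]
  nlinarith

theorem norm_padovanCoeff_lt_half (hα : α ^ 3 = α + 1) (hβ : β ^ 3 = β + 1) (hβim : β.im ≠ 0) :
    ‖padovanCoeff β α (conj β)‖ < 1 / 2 := by
  obtain ⟨hαC, hγ, hαβ, hαγ, hβγ⟩ := cubic_roots_of_im_ne_zero hα hβ hβim
  set b := padovanCoeff β α (conj β)
  have hconj : conj b = padovanCoeff (conj β) α β := by
    simp only [b, map_padovanCoeff, Complex.conj_ofReal, Complex.conj_conj]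
  have hnormSq : Complex.normSq b = (α ^ 2 - α) / ((3 * α ^ 2 - 1) * (3 * α ^ 2 - 4)) := by
    exact_mod_cast (Complex.mul_conj b).symm.trans (hconj ▸
      padovanCoeff_mul_padovanCoeff hαC hβ hγ hαβ hαγ hβγ)
  obtain ⟨hα_gt, hα_lt⟩ := padovan_real_root_bounds hα
  refine lt_of_pow_lt_pow_left₀ 2 (by norm_num) ?_
  rw [← Complex.normSq_eq_norm_sq, hnormSq, div_lt_iff₀ (by nlinarith)]
  nlinarith

theorem abs_padovan_sub_lt_one {a : ℝ} (hα : α ^ 3 = α + 1) (hβ : β ^ 3 = β + 1)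
    (hβim : β.im ≠ 0) (ha : (a : ℂ) = padovanCoeff (α : ℂ) β (conj β)) (n : ℕ) :
    |(padovan n : ℝ) - a * α ^ n| < 1 := by
  obtain ⟨hαC, hγ, hαβ, hαγ, hβγ⟩ := cubic_roots_of_im_ne_zero hα hβ hβim
  set b := padovanCoeff β α (conj β)
  have hconj : padovanCoeff (conj β) α β = conj b := by
    simp only [b, map_padovanCoeff, Complex.conj_ofReal, Complex.conj_conj]
  have hbinet := padovan_binet hαC hβ hγ hαβ hαγ hβγ n
  rw [← ha, hconj, ← map_pow, ← map_mul, add_assoc, Complex.add_conj] at hbinet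
  have herror : (padovan n : ℝ) - a * α ^ n = 2 * (b * β ^ n).re := by
    apply Complex.ofReal_injective
    push_cast at hbinet ⊢
    linear_combination hbinet
  calc |(padovan n : ℝ) - a * α ^ n| = 2 * |(b * β ^ n).re| := by
        rw [herror, abs_mul, abs_two]
    _ ≤ 2 * (‖b‖ * ‖β‖ ^ n) := by
        rw [← norm_pow, ← norm_mul]
        gcongr
        exact Complex.abs_re_le_norm _
    _ ≤ 2 * ‖b‖ := by
        gcongr
        exact mul_le_of_le_one_right (norm_nonneg b)
          (pow_le_one₀ (norm_nonneg β) (norm_le_one_of_cubic hα hβ hβim))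
    _ < 1 := by linarith [norm_padovanCoeff_lt_half hα hβ hβim]

theorem half_lt_of_ofReal_eq_padovanCoeff {a : ℝ} (hα : α ^ 3 = α + 1) (hβ : β ^ 3 = β + 1)
    (hβim : β.im ≠ 0) (ha : (a : ℂ) = padovanCoeff (α : ℂ) β (conj β)) : 1 / 2 < a := by
  obtain ⟨hαC, hγ, hαβ, hαγ, hβγ⟩ := cubic_roots_of_im_ne_zero hα hβ hβim
  have ha' : a = (α + 1) / (3 * α ^ 2 - 1) := by
    exact_mod_cast ha.trans (padovanCoeff_eq_of_cubic hαC hβ hγ hαβ hαγ hβγ)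
  obtain ⟨hα_gt, hα_lt⟩ := padovan_real_root_bounds hα
  rw [ha', lt_div_iff₀ (by nlinarith)]
  nlinarith

end Complex

theorem second_linear_form_bound_general
    (α a : ℝ) (hα : α ^ 3 = α + 1)
    (β γ : ℂ) (hβ : β ^ 3 = β + 1) (hβim : β.im ≠ 0) (hγ : γ = starRingEnd ℂ β)
    (ha : (a : ℂ) = ((α : ℂ) + 1) / (((α : ℂ) - β) * ((α : ℂ) - γ)))
    (n d₁ d₂ ℓ₁ ℓ₂ : ℕ)
    (hd₂ : d₂ ≤ 9)
    (heq : (9 : ℤ) * (padovan n : ℤ) =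
      (d₁ : ℤ) * 10 ^ (ℓ₁ + ℓ₂) - ((d₁ : ℤ) - (d₂ : ℤ)) * 10 ^ ℓ₂ - (d₂ : ℤ)) :
    |9 * a * α ^ n - ((d₁ : ℝ) * 10 ^ ℓ₁ - ((d₁ : ℝ) - (d₂ : ℝ))) * 10 ^ ℓ₂| < 18 ∧
      |((d₁ : ℝ) * 10 ^ ℓ₁ - ((d₁ : ℝ) - (d₂ : ℝ))) / (9 * a) * α ^ (-(n : ℤ)) *
          10 ^ ℓ₂ - 1| < 4 / α ^ n := by
  subst hγ
  have herror := abs_padovan_sub_lt_one hα hβ hβim ha n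
  have ha_gt := half_lt_of_ofReal_eq_padovanCoeff hα hβ hβim ha
  have hd₂R : (d₂ : ℝ) ≤ 9 := by exact_mod_cast hd₂
  have heqR : 9 * (padovan n : ℝ) =
      (d₁ : ℝ) * 10 ^ (ℓ₁ + ℓ₂) - ((d₁ : ℝ) - d₂) * 10 ^ ℓ₂ - d₂ := by exact_mod_cast heq
  set X := ((d₁ : ℝ) * 10 ^ ℓ₁ - ((d₁ : ℝ) - (d₂ : ℝ))) * 10 ^ ℓ₂
  have hfirst : |9 * a * α ^ n - X| < 18 := by
    have hX : 9 * a * α ^ n - X = 9 * (a * α ^ n - padovan n) - d₂ := by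
      rw [pow_add] at heqR
      linear_combination heqR
    rw [abs_lt] at herror ⊢
    constructor <;> linarith [Nat.cast_nonneg (α := ℝ) d₂]
  refine ⟨hfirst, ?_⟩
  have hαn : 0 < α ^ n := pow_pos (by linarith [(padovan_real_root_bounds hα).1]) n
  have hu : 0 < 9 * a * α ^ n := by positivity
  have hrw : ((d₁ : ℝ) * 10 ^ ℓ₁ - ((d₁ : ℝ) - (d₂ : ℝ))) / (9 * a) * α ^ (-(n : ℤ)) * 10 ^ ℓ₂ - 1
      = -(9 * a * α ^ n - X) / (9 * a * α ^ n) := by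
    rw [zpow_neg, zpow_natCast]
    field_simp
    ring
  rw [hrw, abs_div, abs_neg, abs_of_pos hu, div_lt_div_iff₀ hu hαn]
  nlinarith

/-- If `n > 500` and `P n = (1/9)(d₁·10^(ℓ₁+ℓ₂) − (d₁−d₂)·10^ℓ₂ − d₂)` with distinct
digits `d₁ ≠ d₂`, `d₁ > 0`, `ℓ₁, ℓ₂ ≥ 1`, then
`|9·a·α^n − (d₁·10^ℓ₁ − (d₁−d₂))·10^ℓ₂| < 18` and
`|((d₁·10^ℓ₁ − (d₁−d₂))/(9a))·α^(−n)·10^ℓ₂ − 1| < 4/α^n`. -/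
theorem second_linear_form_bound
    (α a : ℝ) (hα : α ^ 3 = α + 1)
    (β γ : ℂ) (hβ : β ^ 3 = β + 1) (hβim : β.im ≠ 0) (hγ : γ = starRingEnd ℂ β)
    (ha : (a : ℂ) = ((α : ℂ) + 1) / (((α : ℂ) - β) * ((α : ℂ) - γ)))
    (n d₁ d₂ ℓ₁ ℓ₂ : ℕ) (hn : 500 < n)
    (hd₁ : d₁ ≤ 9) (hd₂ : d₂ ≤ 9) (hne : d₁ ≠ d₂) (hd₁pos : 0 < d₁)
    (hℓ₁ : 1 ≤ ℓ₁) (hℓ₂ : 1 ≤ ℓ₂)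
    (heq : (9 : ℤ) * (padovan n : ℤ) =
      (d₁ : ℤ) * 10 ^ (ℓ₁ + ℓ₂) - ((d₁ : ℤ) - (d₂ : ℤ)) * 10 ^ ℓ₂ - (d₂ : ℤ)) :
    |9 * a * α ^ n - ((d₁ : ℝ) * 10 ^ ℓ₁ - ((d₁ : ℝ) - (d₂ : ℝ))) * 10 ^ ℓ₂| < 18 ∧
      |((d₁ : ℝ) * 10 ^ ℓ₁ - ((d₁ : ℝ) - (d₂ : ℝ))) / (9 * a) * α ^ (-(n : ℤ)) *
          10 ^ ℓ₂ - 1| < 4 / α ^ n :=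
  second_linear_form_bound_general α a hα β γ hβ hβim hγ ha n d₁ d₂ ℓ₁ ℓ₂ hd₂ heq
end

section
/- Let r ≥ 1 be an integer and H, L real numbers with H > (4r²)^r and H > L/(log L)^r. Then L < 2^r·H·(log H)^r. -/
/-- The lemma of Gúzman Sánchez and Luca: if `r ≥ 1`, `H > (4r²)^r`, `L > 1`, and
`H > L/(log L)^r`, then `L < 2^r·H·(log H)^r`. -/
theorem guzman_sanchez_luca
    (r : ℕ) (hr : 1 ≤ r) (H L : ℝ) (hL : 1 < L)
    (hH1 : H > (4 * (r : ℝ) ^ 2) ^ r)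
    (hH2 : H > L / (Real.log L) ^ r) :
    L < 2 ^ r * H * (Real.log H) ^ r := by
  have hr' : (1:ℝ) ≤ (r:ℝ) := by exact_mod_cast hr
  have h4r : (4:ℝ) ≤ 4 * (r:ℝ)^2 := by nlinarith
  have hbase : (4:ℝ) ≤ (4*(r:ℝ)^2)^r := by
    calc (4:ℝ) = 4^1 := by ring
    _ ≤ (4:ℝ)^r := pow_le_pow_right₀ (by norm_num) hr
    _ ≤ (4*(r:ℝ)^2)^r := pow_le_pow_left₀ (by norm_num) h4r r
  have hH4 : (4:ℝ) < H := lt_of_le_of_lt hbase hH1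
  have hH0 : (1:ℝ) < H := by linarith
  have ht0 : 0 < Real.log L := Real.log_pos hL
  have htr : 0 < (Real.log L)^r := pow_pos ht0 r
  have hL0 : (0:ℝ) < L := by linarith
  have hLH : L < H * (Real.log L)^r := by
    have := (div_lt_iff₀ htr).mp hH2
    linarith
  have hh0 : 0 < Real.log H := Real.log_pos hH0
  by_cases hcase : L ≤ H^2
  · have ht2h : Real.log L ≤ 2 * Real.log H := by
      have h1 : Real.log L ≤ Real.log (H^2) := Real.log_le_log hL0 hcase
      rwa [Real.log_pow, Nat.cast_ofNat] at h1
    calc L < H * (Real.log L)^r := hLH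
      _ ≤ H * (2*Real.log H)^r := by
          apply mul_le_mul_of_nonneg_left _ (by linarith)
          exact pow_le_pow_left₀ ht0.le ht2h r
      _ = 2 ^ r * H * (Real.log H) ^ r := by rw [mul_pow]; ring
  · exfalso
    push_neg at hcase
    set t := Real.log L with hts
    -- 2 log H < t
    have h2h : 2 * Real.log H < t := by
      have h1 : Real.log (H^2) < Real.log L := Real.log_lt_log (by positivity) hcase
      rwa [Real.log_pow, Nat.cast_ofNat] at h1
    -- t < t/2 + r log t
    have hkey : t < Real.log H + r * Real.log t := by
      have h1 : Real.log L < Real.log (H * t^r) := Real.log_lt_log hL0 hLH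
      rwa [Real.log_mul (by linarith) (ne_of_gt htr), Real.log_pow] at h1
    have hkey2 : t < t/2 + r * Real.log t := by linarith
    -- lower bound on t
    have hrpos : (0:ℝ) < (r:ℝ) := by linarith
    have hlow : 2 * r * Real.log (4*(r:ℝ)^2) < t := by
      have h1 : Real.log ((4*(r:ℝ)^2)^r) < Real.log H :=
        Real.log_lt_log (by positivity) hH1
      rw [Real.log_pow] at h1
      nlinarith
    -- tangent line bound: log t ≤ log (4r) + t/(4r) - 1
    have htan : Real.log t ≤ Real.log (4*(r:ℝ)) + t/(4*(r:ℝ)) - 1 := by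
      have h1 : Real.log (t / (4*(r:ℝ))) ≤ t/(4*(r:ℝ)) - 1 :=
        Real.log_le_sub_one_of_pos (by positivity)
      rw [Real.log_div (ne_of_gt ht0) (by positivity)] at h1
      linarith
    -- derive t < 4r log(4r) - 4r
    have hup : t < 4*(r:ℝ)*Real.log (4*(r:ℝ)) - 4*(r:ℝ) := by
      have h2 : (r:ℝ) * Real.log t ≤ (r:ℝ) * (Real.log (4*(r:ℝ)) + t/(4*(r:ℝ)) - 1) :=
        mul_le_mul_of_nonneg_left htan (by linarith)
      have h3 : (r:ℝ) * (t/(4*(r:ℝ))) = t/4 := by field_simp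
      nlinarith
    -- combine
    have hcomb : 2*(r:ℝ)*Real.log (4*(r:ℝ)^2) < 4*(r:ℝ)*Real.log (4*(r:ℝ)) - 4*(r:ℝ) := by
      linarith
    have hlogsum : Real.log (4*(r:ℝ)) + Real.log (4*(r:ℝ)) = Real.log (16*(r:ℝ)^2) := by
      rw [← Real.log_mul (by positivity) (by positivity)]; ring_nf
    have hlogsum2 : Real.log (16*(r:ℝ)^2) = Real.log 4 + Real.log (4*(r:ℝ)^2) := by
      rw [← Real.log_mul (by norm_num) (by positivity)]; ring_nf
    have hlog4 : Real.log 4 = 2 * Real.log 2 := by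
      rw [show (4:ℝ) = 2^2 by norm_num, Real.log_pow]; norm_num
    have hlog2 : Real.log 2 < 0.6931471808 := Real.log_two_lt_d9
    nlinarith [hcomb, hlogsum, hlogsum2]
end

section
/- Let M be a positive integer, τ an irrational real number, and p/q a convergent of the continued fraction expansion of τ with q > 6M. Let A, B, μ be real numbers with A > 0 and B > 1, and set ε := ‖μq‖ − M·‖τq‖, where ‖X‖ denotes the distance from the real number X to the nearest integer. If ε > 0, then there is no solution to the inequality 0 < |uτ − v + μ| < A·B^{−w} in positive integers u, v, w with u ≤ M and w ≥ log(Aq/ε)/log B. -/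
/-- The distance from a real number `X` to the nearest integer,
`‖X‖ = min{|X − n| : n ∈ ℤ}`. -/
noncomputable def distToNearestInt (X : ℝ) : ℝ := |X - round X|

lemma round_eq_of_abs_lt_half {x : ℝ} {m : ℤ} (h : |x - m| < 1/2) : round x = m := by
  rw [round_eq]
  rw [abs_lt] at h
  apply Int.floor_eq_iff.mpr
  constructor <;> linarith

lemma dist_round_le (x : ℝ) (m : ℤ) : |x - round x| ≤ |x - (m : ℝ)| := by
  rcases le_or_gt (1/2 : ℝ) |x - (m : ℝ)| with h | h
  · exact (abs_sub_round x).trans h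
  · rw [round_eq_of_abs_lt_half h]

lemma conts_int (τ : ℝ) : ∀ n, ∃ a b : ℤ, ((GenContFract.of τ).contsAux n).a = (a : ℝ) ∧
    ((GenContFract.of τ).contsAux n).b = (b : ℝ)
  | 0 => ⟨1, 0, by simp [GenContFract.contsAux]⟩
  | 1 => ⟨⌊τ⌋, 1, by simp [GenContFract.contsAux, GenContFract.of_h_eq_floor]⟩
  | (n+2) => by
    obtain ⟨a1, b1, ha1, hb1⟩ := conts_int τ n
    obtain ⟨a2, b2, ha2, hb2⟩ := conts_int τ (n+1)
    cases hs : (GenContFract.of τ).s.get? n with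
    | none =>
      refine ⟨a2, b2, ?_, ?_⟩ <;> simp [GenContFract.contsAux, hs, ha2, hb2]
    | some gp =>
      have hga : gp.a = 1 := GenContFract.of_partNum_eq_one (GenContFract.partNum_eq_s_a hs)
      obtain ⟨z, hz⟩ := GenContFract.exists_int_eq_of_partDen (GenContFract.partDen_eq_s_b hs)
      refine ⟨z * a2 + a1, z * b2 + b1, ?_, ?_⟩ <;>
        simp [GenContFract.contsAux, hs, GenContFract.nextConts, GenContFract.nextNum,
          GenContFract.nextDen, hga, hz, ha1, ha2, hb1, hb2]

/-- The Baker–Davenport reduction lemma (Dujella–Pethő variant): let `M` be a positive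
integer, `τ` irrational, and `p/q` a convergent of the continued fraction expansion of
`τ` with `q > 6M`; let `A > 0`, `B > 1`, `μ` be reals and `ε := ‖μq‖ − M‖τq‖`. If
`ε > 0`, then there is no solution to `0 < |uτ − v + μ| < A·B^(−w)` in positive
integers `u, v, w` with `u ≤ M` and `w ≥ log(Aq/ε)/log B`. -/
theorem baker_davenport_reduction
    (M : ℕ) (hM : 0 < M) (τ : ℝ) (hτ : Irrational τ)
    (k : ℕ) (p q : ℝ)
    (hp : p = (GenContFract.of τ).nums k) (hq : q = (GenContFract.of τ).dens k)
    (hq6M : q > 6 * M)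
    (A B μ : ℝ) (hA : A > 0) (hB : B > 1)
    (ε : ℝ) (hε : ε = distToNearestInt (μ * q) - M * distToNearestInt (τ * q))
    (hεpos : ε > 0) :
    ¬∃ (u v w : ℕ), 0 < u ∧ 0 < v ∧ 0 < w ∧ (u : ℕ) ≤ M ∧
      (w : ℝ) ≥ Real.log (A * q / ε) / Real.log B ∧
      0 < |(u : ℝ) * τ - (v : ℝ) + μ| ∧
      |(u : ℝ) * τ - (v : ℝ) + μ| < A * B ^ (-(w : ℤ)) := by
  rintro ⟨u, v, w, hu, hv, hw, huM, hwlog, h1, h2⟩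
  -- basic positivity
  have hM1 : (1 : ℝ) ≤ (M : ℝ) := by exact_mod_cast hM
  have hq6 : q > 6 := by nlinarith
  have hqpos : (0 : ℝ) < q := by linarith
  -- the continued-fraction data
  have hnt : ∀ n, ¬(GenContFract.of τ).TerminatedAt n := by
    intro n h
    obtain ⟨r, hr⟩ := (GenContFract.terminates_iff_rat τ).1 ⟨n, h⟩
    exact hτ ⟨r, hr.symm⟩
  obtain ⟨pz, qz, hpz, hqz⟩ := conts_int τ (k + 1)
  have hpz' : p = (pz : ℝ) := by
    rw [hp, GenContFract.num_eq_conts_a, GenContFract.nth_cont_eq_succ_nth_contAux, hpz]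
  have hqz' : q = (qz : ℝ) := by
    rw [hq, GenContFract.den_eq_conts_b, GenContFract.nth_cont_eq_succ_nth_contAux, hqz]
  -- key approximation bound
  have hden : q ≤ (GenContFract.of τ).dens (k + 1) := hq ▸ GenContFract.of_den_mono
  have hden0 : (0 : ℝ) < (GenContFract.of τ).dens (k + 1) := lt_of_lt_of_le hqpos hden
  have habs : |τ - p / q| ≤ 1 / (q * (GenContFract.of τ).dens (k + 1)) := by
    have := GenContFract.abs_sub_convs_le (v := τ) (n := k) (hnt k)
    rwa [GenContFract.conv_eq_num_div_den, ← hp, ← hq] at this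
  have hkey : |τ * q - p| < 1 / 6 := by
    have h1q : 1 / (q * (GenContFract.of τ).dens (k + 1)) ≤ 1 / (q * q) := by
      apply div_le_div_of_nonneg_left zero_le_one (by positivity)
      exact mul_le_mul_of_nonneg_left hden hqpos.le
    have heq : |τ * q - p| = |τ - p / q| * q := by
      have h5 : τ * q - p = (τ - p / q) * q := by field_simp
      rw [h5, abs_mul, abs_of_pos hqpos]
    have : |τ - p / q| * q ≤ 1 / (q * q) * q := by
      apply mul_le_mul_of_nonneg_right (habs.trans h1q) hqpos.le
    have h2q : 1 / (q * q) * q = 1 / q := by field_simp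
    rw [heq]
    calc |τ - p / q| * q ≤ 1 / q := by rw [← h2q]; exact this
    _ < 1 / 6 := by
      apply div_lt_div_of_pos_left one_pos (by norm_num) hq6
  -- nearest integer to τ*q is pz
  have hround : round (τ * q) = pz := by
    apply round_eq_of_abs_lt_half
    rw [← hpz']
    linarith
  have hdistτ : distToNearestInt (τ * q) = |τ * q - p| := by
    rw [distToNearestInt, hround, hpz']
  -- bound on A * B ^ (-w)
  have hlogB : 0 < Real.log B := Real.log_pos hB
  have hAq : 0 < A * q / ε := by positivity
  have hBw : A * q / ε ≤ B ^ w := by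
    have h3 : Real.log (A * q / ε) ≤ (w : ℝ) * Real.log B := (div_le_iff₀ hlogB).mp hwlog
    have h4 : Real.log (A * q / ε) ≤ Real.log (B ^ w) := by
      rwa [Real.log_pow]
    exact (Real.log_le_log_iff hAq (by positivity)).mp h4
  have hBwpos : (0 : ℝ) < B ^ w := by positivity
  have hABw : A * B ^ (-(w : ℤ)) ≤ ε / q := by
    rw [zpow_neg, zpow_natCast, ← div_eq_mul_inv]
    rw [div_le_div_iff₀ hBwpos hqpos]
    calc A * q = (A * q / ε) * ε := by field_simp
    _ ≤ B ^ w * ε := by apply mul_le_mul_of_nonneg_right hBw hεpos.le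
    _ = ε * B ^ w := by ring
  -- multiply the main inequality by q
  have hmain : |((u : ℝ) * τ - v + μ) * q| < ε := by
    rw [abs_mul, abs_of_pos hqpos]
    calc |(u : ℝ) * τ - v + μ| * q < (ε / q) * q := by
          apply mul_lt_mul_of_pos_right (lt_of_lt_of_le h2 hABw) hqpos
    _ = ε := by field_simp
  -- nearest-integer bound for μ*q
  have hukey : (u : ℝ) * |τ * q - p| ≤ (M : ℝ) * distToNearestInt (τ * q) := by
    rw [hdistτ]
    apply mul_le_mul_of_nonneg_right _ (abs_nonneg _)
    exact_mod_cast huM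
  have hdecomp : μ * q - ((v : ℤ) * qz - (u : ℤ) * pz : ℤ) =
      ((u : ℝ) * τ - v + μ) * q - (u : ℝ) * (τ * q - p) := by
    push_cast
    rw [← hpz', ← hqz']
    ring
  have hfinal : distToNearestInt (μ * q) ≤
      |((u : ℝ) * τ - v + μ) * q| + (u : ℝ) * |τ * q - p| := by
    calc distToNearestInt (μ * q) ≤ |μ * q - (((v : ℤ) * qz - (u : ℤ) * pz : ℤ) : ℝ)| :=
          dist_round_le _ _
    _ = |((u : ℝ) * τ - v + μ) * q - (u : ℝ) * (τ * q - p)| := by rw [hdecomp]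
    _ ≤ |((u : ℝ) * τ - v + μ) * q| + |(u : ℝ) * (τ * q - p)| := abs_sub _ _
    _ = |((u : ℝ) * τ - v + μ) * q| + (u : ℝ) * |τ * q - p| := by
          congr 1
          rw [abs_mul, Nat.abs_cast]
  have : distToNearestInt (μ * q) < ε + (M : ℝ) * distToNearestInt (τ * q) := by
    calc distToNearestInt (μ * q) ≤ |((u : ℝ) * τ - v + μ) * q| + (u : ℝ) * |τ * q - p| :=
          hfinal
    _ < ε + (M : ℝ) * distToNearestInt (τ * q) := by
          apply add_lt_add_of_lt_of_le hmain hukey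
  linarith [hε]
end
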